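/- arXiv:1403.2813 — 5 statements merged into one kernel-verified Lean document; each statement's English description precedes it below -/
import Mathlib

section
/- In a Beth model with domain a tree M having root ε, the axiom scheme (CS1) for the creating subject holds: for every formula φ and every natural number z, the root forces (⊢_z φ) ∨ ¬(⊢_z φ), where the atomic predicate ⊢_z φ is valuated true at node α iff there exists γ with α ≤ γ, lh(γ) = z, and γ forces φ. -/
/-- Evaluated formulas of a logical-mathematical language: atoms from `A`,
falsity, conjunction, disjunction, implication, and quantifiers over a
domain `D` (an "evaluated" quantified formula is a `D`-indexed family). -/
inductive Fml (A D : Type) where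
  | atom : A → Fml A D
  | bot  : Fml A D
  | and  : Fml A D → Fml A D → Fml A D
  | or   : Fml A D → Fml A D → Fml A D
  | imp  : Fml A D → Fml A D → Fml A D
  | all  : (D → Fml A D) → Fml A D
  | ex   : (D → Fml A D) → Fml A D

/-- Beth forcing over a poset given by relation `le`, with atomic valuation `Val`.
Paths are maximal chains. -/
def Forces {M A D : Type} (le : M → M → Prop) (Val : M → A → Prop) :
    M → Fml A D → Prop
  | α, .atom a => ∀ S : Set M, IsMaxChain le S → α ∈ S → ∃ β ∈ S, Val β a
  | _, .bot => False
  | α, .and φ ψ => Forces le Val α φ ∧ Forces le Val α ψ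
  | α, .or φ ψ => ∀ S : Set M, IsMaxChain le S → α ∈ S →
      ∃ β ∈ S, (Forces le Val β φ ∨ Forces le Val β ψ)
  | α, .imp φ ψ => ∀ β, le β α → Forces le Val β φ → Forces le Val β ψ
  | α, .all φ => ∀ c, Forces le Val α (φ c)
  | α, .ex φ => ∀ S : Set M, IsMaxChain le S → α ∈ S →
      ∃ β ∈ S, ∃ c, Forces le Val β (φ c)

/-- Extended valuation: atoms are either base atoms from `A`, or the
creating-subject atoms `⊢_z φ` (for `z : ℕ`), the latter being valuated true
at `α` iff some node `γ ≥ α` of length `z` forces the fixed base formula `φ`. -/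
def ValCS {M A D : Type} (le : M → M → Prop) (Val : M → A → Prop)
    (lh : M → ℕ) (φ : Fml A D) : M → (A ⊕ ℕ) → Prop
  | α, .inl a => Val α a
  | α, .inr z => ∃ γ, le α γ ∧ lh γ = z ∧ Forces le Val γ φ

/-- the creating-subject axiom (CS1) holds in the Beth model:
for every base formula φ and every z, the root forces (⊢_z φ) ∨ ¬(⊢_z φ). -/
theorem creating_subject_CS1 {M A D : Type} (le : M → M → Prop)
    (hrefl : ∀ x, le x x) (htrans : ∀ x y z, le x y → le y z → le x z)
    (hantisymm : ∀ x y, le x y → le y x → x = y)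
    (htree : ∀ x γ δ, le x γ → le x δ → le γ δ ∨ le δ γ)
    (Val : M → A → Prop)
    (hVal : ∀ a α β, le β α → Val α a → Val β a)
    (lh : M → ℕ)
    (hlh : ∀ α β, le β α → lh α ≤ lh β)
    (ε : M) (hroot : ∀ x, le x ε) (hlhroot : lh ε = 0)
    (hlength : ∀ S : Set M, IsMaxChain le S → ∀ z : ℕ, ∃! β, β ∈ S ∧ lh β = z)
    (φ : Fml A D) (z : ℕ) :
    Forces le (ValCS le Val lh φ) ε
      ((Fml.or (Fml.atom (Sum.inr z))
        (Fml.imp (Fml.atom (Sum.inr z)) Fml.bot)) : Fml (A ⊕ ℕ) D) := by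

  intro S hS hεS
  obtain ⟨β, ⟨hβS, hβz⟩, _⟩ := hlength S hS z
  refine ⟨β, hβS, ?_⟩
  by_cases hφ : Forces le Val β φ
  · left
    intro S' _ hβS'
    exact ⟨β, hβS', β, hrefl β, hβz, hφ⟩
  · right
    intro δ hδβ hatom
    obtain ⟨T, hT, hδT⟩ := IsChain.exists_maxChain
      (Set.subsingleton_singleton (a := δ)).isChain (r := le)
    obtain ⟨β', hβ'T, γ, hβ'γ, hγz, hγφ⟩ := hatom T hT (hδT rfl)
    -- δ and β' are comparable
    have hcmp : le δ β' ∨ le β' δ := by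
      rcases eq_or_ne δ β' with rfl | h
      · exact Or.inl (hrefl δ)
      · exact hT.1 (hδT rfl) hβ'T h
    -- γ and β are comparable
    have hcomp : le γ β ∨ le β γ := by
      rcases hcmp with h | h
      · exact (htree δ γ β (htrans δ β' γ h hβ'γ) hδβ).symm.imp id id |>.symm
      · exact htree β' γ β hβ'γ (htrans β' δ β h hδβ)
    have hchain : IsChain le {γ, β} := by
      intro a ha b hb hne
      simp only [Set.mem_insert_iff, Set.mem_singleton_iff] at ha hb
      rcases ha with rfl | rfl <;> rcases hb with rfl | rfl
      · exact absurd rfl hne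
      · exact hcomp
      · exact hcomp.symm
      · exact absurd rfl hne
    obtain ⟨T2, hT2, hsub⟩ := hchain.exists_maxChain
    obtain ⟨β'', ⟨_, _⟩, huniq2⟩ := hlength T2 hT2 z
    have h1 : γ = β'' := huniq2 γ ⟨hsub (Or.inl rfl), hγz⟩
    have h2 : β = β'' := huniq2 β ⟨hsub (Or.inr rfl), hβz⟩
    exact hφ (h2 ▸ h1 ▸ hγφ)
end

section
/- In a Beth model on a tree where each path contains exactly one node of each length, the creating-subject axiom (CS2) holds at every node: if α forces (⊢_z φ) then α forces (⊢_{z+y} φ) for every y, where ⊢_z φ is the atomic predicate valuated true at α iff some γ ≥ α with lh(γ) = z forces φ. -/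
/-- In a tree, a maximal chain is closed upward (toward the root). -/
lemma maxChain_mem_of_le {M : Type} {le : M → M → Prop}
    (htrans : ∀ x y z, le x y → le y z → le x z)
    (htree : ∀ x γ δ, le x γ → le x δ → le γ δ ∨ le δ γ)
    {S : Set M} (hS : IsMaxChain le S) {β' b : M}
    (hβ' : β' ∈ S) (hle : le β' b) : b ∈ S := by
  by_contra hb
  have key : ∀ x ∈ S, le x b ∨ le b x := by
    intro x hx
    by_cases hx' : x = β'
    · subst hx'; exact Or.inl hle
    rcases hS.1 hβ' hx (fun e => hx' e.symm) with h1 | h1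
    · exact (htree β' b x hle h1).symm
    · exact Or.inl (htrans x β' b h1 hle)
  have hchain : IsChain le (S ∪ {b}) := by
    intro x hx y hy hxy
    rcases hx with hx | hx <;> rcases hy with hy | hy
    · exact hS.1 hx hy hxy
    · rcases hy with rfl; exact key x hx
    · rcases hx with rfl; exact (key y hy).symm
    · rcases hx with rfl; rcases hy with rfl; exact absurd rfl hxy
  have := hS.2 hchain (Set.subset_union_left)
  exact hb (this ▸ Set.mem_union_right S rfl : b ∈ S)

/-- Beth forcing is monotone along the order. -/
lemma forces_mono {M A D : Type} {le : M → M → Prop}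
    (htrans : ∀ x y z, le x y → le y z → le x z)
    (htree : ∀ x γ δ, le x γ → le x δ → le γ δ ∨ le δ γ)
    (Val : M → A → Prop) :
    ∀ (φ : Fml A D) {β β' : M}, le β' β → Forces le Val β φ →
      Forces le Val β' φ := by
  intro φ
  induction φ with
  | atom a =>
      intro β β' hle h S hS hβ'
      exact h S hS (maxChain_mem_of_le htrans htree hS hβ' hle)
  | bot => intro β β' _ h; exact h
  | and φ ψ ihφ ihψ => intro β β' hle h; exact ⟨ihφ hle h.1, ihψ hle h.2⟩
  | or φ ψ ihφ ihψ =>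
      intro β β' hle h S hS hβ'
      exact h S hS (maxChain_mem_of_le htrans htree hS hβ' hle)
  | imp φ ψ ihφ ihψ =>
      intro β β' hle h γ hγ hφ
      exact h γ (htrans _ _ _ hγ hle) hφ
  | all φ ih => intro β β' hle h c; exact ih c hle (h c)
  | ex φ ih =>
      intro β β' hle h S hS hβ'
      exact h S hS (maxChain_mem_of_le htrans htree hS hβ' hle)

/-- the creating-subject axiom (CS2) holds at every node:
if α forces (⊢_z φ) then α forces (⊢_{z+y} φ). -/
theorem creating_subject_CS2 {M A D : Type} (le : M → M → Prop)
    (hrefl : ∀ x, le x x) (htrans : ∀ x y z, le x y → le y z → le x z)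
    (hantisymm : ∀ x y, le x y → le y x → x = y)
    (htree : ∀ x γ δ, le x γ → le x δ → le γ δ ∨ le δ γ)
    (Val : M → A → Prop)
    (hVal : ∀ a α β, le β α → Val α a → Val β a)
    (lh : M → ℕ)
    (hlh : ∀ α β, le β α → lh α ≤ lh β)
    (ε : M) (hroot : ∀ x, le x ε) (hlhroot : lh ε = 0)
    (hlength : ∀ S : Set M, IsMaxChain le S → ∀ z : ℕ, ∃! β, β ∈ S ∧ lh β = z)
    (φ : Fml A D) (α : M) (z y : ℕ)
    (h : Forces le (ValCS le Val lh φ) α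
      ((Fml.atom (Sum.inr z)) : Fml (A ⊕ ℕ) D)) :
    Forces le (ValCS le Val lh φ) α
      ((Fml.atom (Sum.inr (z + y))) : Fml (A ⊕ ℕ) D) := by
  intro S hS hα
  obtain ⟨β, hβS, γ, hβγ, hγz, hγφ⟩ := h S hS hα
  have hγS : γ ∈ S := maxChain_mem_of_le htrans htree hS hβS hβγ
  obtain ⟨δ, ⟨hδS, hδlh⟩, huniq⟩ := hlength S hS (z + y)
  by_cases heq : γ = δ
  · subst heq; exact ⟨γ, hγS, γ, hrefl γ, hδlh, hγφ⟩
  rcases hS.1 hγS hδS heq with h1 | h1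
  · have h2 := hlh δ γ h1
    have hzy : z + y = z := by omega
    exact ⟨γ, hγS, γ, hrefl γ, by omega, hγφ⟩
  · exact ⟨δ, hδS, δ, hrefl δ, hδlh,
      forces_mono htrans htree Val φ h1 hγφ⟩
end

section
/- In a Beth model as above, the creating-subject axiom (CS3) holds at every node α: α forces ∃z (⊢_z φ) if and only if α forces φ. -/
/-- In a tree, any node above a member of a maximal chain is in the chain. -/
lemma maxChain_mem_of_above {M : Type} {le : M → M → Prop}
    (htrans : ∀ x y z, le x y → le y z → le x z)
    (htree : ∀ x γ δ, le x γ → le x δ → le γ δ ∨ le δ γ)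
    {S : Set M} (hS : IsMaxChain le S) {β γ : M} (hβ : β ∈ S) (h : le β γ) :
    γ ∈ S := by
  have hchain : IsChain le (insert γ S) := by
    refine hS.1.insert (fun η hη hne => ?_)
    by_cases hbe : β = η
    · subst hbe; exact Or.inr h
    · rcases hS.1 hβ hη hbe with h1 | h1
      · exact htree β γ η h h1
      · exact Or.inr (htrans η β γ h1 h)
  have := hS.2 hchain (Set.subset_insert γ S)
  rw [this]; exact Set.mem_insert γ S

/-- Monotonicity of Beth forcing. -/
lemma Forces.mono {M A D : Type} {le : M → M → Prop}
    (htrans : ∀ x y z, le x y → le y z → le x z)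
    (htree : ∀ x γ δ, le x γ → le x δ → le γ δ ∨ le δ γ)
    {Val : M → A → Prop} :
    ∀ (φ : Fml A D) {α β : M}, le β α → Forces le Val α φ → Forces le Val β φ := by
  intro φ
  induction φ with
  | atom a =>
    intro α β hle hF S hS hβ
    exact hF S hS (maxChain_mem_of_above htrans htree hS hβ hle)
  | bot => intro α β _ hF; exact hF
  | and φ ψ ihφ ihψ =>
    intro α β hle hF; exact ⟨ihφ hle hF.1, ihψ hle hF.2⟩
  | or φ ψ ihφ ihψ =>
    intro α β hle hF S hS hβ
    exact hF S hS (maxChain_mem_of_above htrans htree hS hβ hle)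
  | imp φ ψ ihφ ihψ =>
    intro α β hle hF γ hγ hγφ
    exact hF γ (htrans γ β α hγ hle) hγφ
  | all φ ih =>
    intro α β hle hF c; exact ih c hle (hF c)
  | ex φ ih =>
    intro α β hle hF S hS hβ
    exact hF S hS (maxChain_mem_of_above htrans htree hS hβ hle)

/-- Covering (bar) lemma: if every maximal chain through `α` contains a node
forcing `φ`, then `α` forces `φ`. -/
lemma Forces.of_bar {M A D : Type} {le : M → M → Prop}
    (hrefl : ∀ x, le x x)
    (htrans : ∀ x y z, le x y → le y z → le x z)
    (htree : ∀ x γ δ, le x γ → le x δ → le γ δ ∨ le δ γ)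
    {Val : M → A → Prop} :
    ∀ (φ : Fml A D) (α : M),
      (∀ S : Set M, IsMaxChain le S → α ∈ S → ∃ β ∈ S, Forces le Val β φ) →
      Forces le Val α φ := by
  intro φ
  induction φ with
  | atom a =>
    intro α hbar S hS hα
    obtain ⟨β, hβS, hβ⟩ := hbar S hS hα
    exact hβ S hS hβS
  | bot =>
    intro α hbar
    obtain ⟨S, hS, hsub⟩ := (Set.subsingleton_singleton (a := α)).isChain.exists_maxChain
    obtain ⟨β, _, hβ⟩ := hbar S hS (hsub rfl)
    exact hβ
  | and φ ψ ihφ ihψ =>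
    intro α hbar
    constructor
    · exact ihφ α fun S hS hα => (hbar S hS hα).imp fun β ⟨h1, h2⟩ => ⟨h1, h2.1⟩
    · exact ihψ α fun S hS hα => (hbar S hS hα).imp fun β ⟨h1, h2⟩ => ⟨h1, h2.2⟩
  | or φ ψ ihφ ihψ =>
    intro α hbar S hS hα
    obtain ⟨β, hβS, hβ⟩ := hbar S hS hα
    exact hβ S hS hβS
  | imp φ ψ ihφ ihψ =>
    intro α hbar δ hδα hδφ
    refine ihψ δ fun S hS hδS => ?_
    have hαS : α ∈ S := maxChain_mem_of_above htrans htree hS hδS hδα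
    obtain ⟨β, hβS, hβ⟩ := hbar S hS hαS
    by_cases hbd : β = δ
    · subst hbd; exact ⟨β, hβS, hβ β (hrefl β) hδφ⟩
    · rcases hS.1 hβS hδS hbd with h1 | h1
      · exact ⟨β, hβS, hβ β (hrefl β) (Forces.mono htrans htree φ h1 hδφ)⟩
      · exact ⟨δ, hδS, hβ δ h1 hδφ⟩
  | all φ ih =>
    intro α hbar c
    exact ih c α fun S hS hα => (hbar S hS hα).imp fun β ⟨h1, h2⟩ => ⟨h1, h2 c⟩
  | ex φ ih =>
    intro α hbar S hS hα
    obtain ⟨β, hβS, hβ⟩ := hbar S hS hα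
    exact hβ S hS hβS

/-- the creating-subject axiom (CS3) holds at every node α:
α forces ∃z (⊢_z φ) if and only if α forces φ. -/
theorem creating_subject_CS3 {M A : Type} (le : M → M → Prop)
    (hrefl : ∀ x, le x x) (htrans : ∀ x y z, le x y → le y z → le x z)
    (hantisymm : ∀ x y, le x y → le y x → x = y)
    (htree : ∀ x γ δ, le x γ → le x δ → le γ δ ∨ le δ γ)
    (Val : M → A → Prop)
    (hVal : ∀ a α β, le β α → Val α a → Val β a)
    (lh : M → ℕ)
    (hlh : ∀ α β, le β α → lh α ≤ lh β)
    (ε : M) (hroot : ∀ x, le x ε) (hlhroot : lh ε = 0)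
    (hlength : ∀ S : Set M, IsMaxChain le S → ∀ z : ℕ, ∃! β, β ∈ S ∧ lh β = z)
    (φ : Fml A ℕ) (α : M) :
    Forces le (ValCS le Val lh φ) α
      ((Fml.ex fun z : ℕ => Fml.atom (Sum.inr z)) : Fml (A ⊕ ℕ) ℕ) ↔
    Forces le Val α φ := by
  constructor
  · intro H
    refine Forces.of_bar hrefl htrans htree φ α fun S hS hα => ?_
    obtain ⟨β, hβS, z, hβ⟩ := H S hS hα
    obtain ⟨δ, hδS, γ, hδγ, _, hγφ⟩ := hβ S hS hβS
    exact ⟨γ, maxChain_mem_of_above htrans htree hS hδS hδγ, hγφ⟩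
  · intro H S hS hα
    exact ⟨α, hα, lh α, fun S' hS' hα' => ⟨α, hα', α, hrefl α, rfl, H⟩⟩
end

section
/- Markov's rule fails in the Beth model over the binary tree: define the atomic family φ(x) to be valuated true at a node α (a finite binary sequence) iff some entry α_k with k < x equals 1. Then the root forces ∀x(φ(x) ∨ ¬φ(x)) and forces ¬¬∃x φ(x), but the root does not force ∃x φ(x). -/
/-- Valuation over the binary tree: `φ(x)` is true at a finite binary
sequence α iff some entry `α_k` with `k < x` equals 1 (= `true`). -/
def markovVal (α : List Bool) (x : ℕ) : Prop :=
  ∃ k < x, α[k]? = some true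

/-! The binary tree is decidable enough for `φ(x) ∨ ¬φ(x)`: along any path one reaches a node of
length `x`, where `φ(x)` is settled once and for all, because a node forces `φ(x)` exactly when
`φ(x)` holds there (test the path that continues with zeros). Every node has an extension with a
`1` in it, which gives `¬¬∃x φ(x)`. But on the all-zero path no node forces any `φ(x)`, so the
root does not force `∃x φ(x)`. -/

theorem IsMaxChain.mem_of_forall {α : Type*} {r : α → α → Prop} {s : Set α} {a : α}
    (hs : IsMaxChain r s) (ha : ∀ b ∈ s, a ≠ b → r a b ∨ r b a) : a ∈ s :=
  (hs.2 (hs.1.insert ha) (Set.subset_insert a s)).symm ▸ Set.mem_insert a s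

section Forces

variable {M A D : Type} {le : M → M → Prop} {Val : M → A → Prop}

theorem forces_atom_of_val {α : M} {a : A} (h : Val α a) :
    Forces le Val α (Fml.atom a : Fml A D) :=
  fun _ _ hα => ⟨α, hα, h⟩

theorem forces_ex_of_forces {α : M} {φ : D → Fml A D} {c : D} (h : Forces le Val α (φ c)) :
    Forces le Val α (Fml.ex φ) :=
  fun _ _ hα => ⟨α, hα, c, h⟩

theorem forces_not_not_of_forall_exists {α : M} {ψ : Fml A D}
    (h : ∀ β, le β α → ∃ γ, le γ β ∧ Forces le Val γ ψ) :
    Forces le Val α (Fml.imp (Fml.imp ψ Fml.bot) Fml.bot) := fun β hβ hnot =>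
  let ⟨γ, hγ, hψ⟩ := h β hβ
  hnot γ hγ hψ

end Forces

section Prefix

variable {α : Type*}

open List

theorem IsMaxChain.exists_length_lt [Inhabited α] {S : Set (List α)}
    (hS : IsMaxChain (fun y x : List α => x <+: y) S) {s : List α} (hs : s ∈ S) :
    ∃ u ∈ S, s.length < u.length := by
  by_contra! hshort
  have hext : s ++ [default] ∈ S := by
    refine hS.mem_of_forall fun u hu _ => Or.inl ?_
    rcases eq_or_ne s u with rfl | hne
    · exact prefix_append _ _
    rcases hS.1 hs hu hne with hus | hsu
    · exact hus.trans (prefix_append _ _)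
    · cases hsu.eq_of_length (le_antisymm hsu.length_le (hshort u hu))
      exact prefix_append _ _
  simpa using hshort _ hext

theorem IsMaxChain.exists_le_length [Inhabited α] {S : Set (List α)}
    (hS : IsMaxChain (fun y x : List α => x <+: y) S) {s : List α} (hs : s ∈ S) (n : ℕ) :
    ∃ u ∈ S, n ≤ u.length := by
  induction n with
  | zero => exact ⟨s, hs, Nat.zero_le _⟩
  | succ n ih =>
    obtain ⟨u, hu, hn⟩ := ih
    obtain ⟨v, hv, huv⟩ := hS.exists_length_lt hu
    exact ⟨v, hv, by omega⟩

end Prefix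

namespace List

variable {α : Type*}

def branch (f : ℕ → α) : Set (List α) := {l | ∀ i (h : i < l.length), l[i] = f i}

theorem ofFn_mem_branch (f : ℕ → α) (n : ℕ) : ofFn (fun i : Fin n => f i) ∈ branch f := by
  simp [branch]

theorem nil_mem_branch (f : ℕ → α) : [] ∈ branch f := by
  simp [branch]

theorem mem_branch_getD (l : List α) (d : α) : l ∈ branch fun i => l.getD i d := by
  intro i h
  simp [h]

theorem eq_of_mem_branch {f : ℕ → α} {l : List α} (hl : l ∈ branch f) {i : ℕ} {a : α}
    (h : l[i]? = some a) : f i = a := by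
  obtain ⟨hi, rfl⟩ := getElem?_eq_some_iff.1 h
  exact (hl i hi).symm

theorem isPrefix_of_mem_branch {f : ℕ → α} {l m : List α} (hl : l ∈ branch f)
    (hm : m ∈ branch f) (hlm : l.length ≤ m.length) : l <+: m := by
  rw [prefix_iff_eq_take]
  refine ext_getElem (by simp [hlm]) fun i hi _ => ?_
  simp [hl i hi, hm i (by omega)]

theorem isMaxChain_branch (f : ℕ → α) :
    IsMaxChain (fun y x : List α => x <+: y) (branch f) := by
  refine ⟨fun l hl m hm _ => ?_, fun T hT hsub => ?_⟩
  · rcases le_total l.length m.length with h | h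
    · exact Or.inr (isPrefix_of_mem_branch hl hm h)
    · exact Or.inl (isPrefix_of_mem_branch hm hl h)
  refine hsub.antisymm fun t ht => ?_
  have hu := ofFn_mem_branch f t.length
  by_cases hne : t = ofFn fun i : Fin t.length => f i
  · exact hne ▸ hu
  have hlen : (ofFn fun i : Fin t.length => f i).length = t.length := length_ofFn
  rcases hT ht (hsub hu) hne with h | h
  · exact h.eq_of_length hlen ▸ hu
  · exact (h.eq_of_length hlen.symm).symm ▸ hu

end List

open List

theorem markovVal_of_isPrefix {β γ : List Bool} {x : ℕ} (hβγ : β <+: γ) (hx : x ≤ β.length)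
    (h : markovVal γ x) : markovVal β x := by
  obtain ⟨k, hk, hγk⟩ := h
  have hkβ : k < β.length := by omega
  refine ⟨k, hk, ?_⟩
  rwa [getElem?_eq_getElem hkβ, hβγ.getElem hkβ, ← getElem?_eq_getElem]

theorem markovVal_append_true (β : List Bool) : markovVal (β ++ [true]) (β.length + 1) :=
  ⟨β.length, Nat.lt_succ_self _, by simp⟩

theorem exists_eq_true_of_markovVal {f : ℕ → Bool} {δ : List Bool} (hδ : δ ∈ branch f)
    {x : ℕ} (h : markovVal δ x) : ∃ k < x, f k = true :=
  let ⟨k, hk, hδk⟩ := h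
  ⟨k, hk, eq_of_mem_branch hδ hδk⟩

theorem forces_atom_iff_markovVal {D : Type} {γ : List Bool} {x : ℕ} :
    Forces (fun y x : List Bool => x <+: y) markovVal γ (Fml.atom x : Fml ℕ D) ↔
      markovVal γ x := by
  refine ⟨fun h => ?_, forces_atom_of_val⟩
  obtain ⟨δ, hδ, hδx⟩ := h _ (isMaxChain_branch _) (mem_branch_getD γ false)
  obtain ⟨k, hk, hγk⟩ := exists_eq_true_of_markovVal hδ hδx
  refine ⟨k, hk, ?_⟩
  rw [getD_eq_getElem?_getD] at hγk
  cases hγ : γ[k]? <;> simp_all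

/-- Markov's rule fails in the Beth model over the binary tree:
the root forces ∀x(φ(x) ∨ ¬φ(x)) and ¬¬∃x φ(x), but not ∃x φ(x). -/
theorem markov_rule_fails :
    Forces (fun y x : List Bool => x <+: y) markovVal []
      ((Fml.all fun x : ℕ =>
        Fml.or (Fml.atom x) (Fml.imp (Fml.atom x) Fml.bot)) : Fml ℕ ℕ) ∧
    Forces (fun y x : List Bool => x <+: y) markovVal []
      ((Fml.imp (Fml.imp (Fml.ex fun x : ℕ => Fml.atom x) Fml.bot)
        Fml.bot) : Fml ℕ ℕ) ∧
    ¬ Forces (fun y x : List Bool => x <+: y) markovVal []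
      ((Fml.ex fun x : ℕ => Fml.atom x) : Fml ℕ ℕ) := by
  refine ⟨fun x S hS hnil => ?_, forces_not_not_of_forall_exists fun β _ => ?_, fun h => ?_⟩
  · obtain ⟨β, hβ, hx⟩ := hS.exists_le_length hnil x
    by_cases hβx : markovVal β x
    · exact ⟨β, hβ, Or.inl (forces_atom_of_val hβx)⟩
    · refine ⟨β, hβ, Or.inr fun γ hβγ hγ => hβx ?_⟩
      exact markovVal_of_isPrefix hβγ hx (forces_atom_iff_markovVal.1 hγ)
  · exact ⟨β ++ [true], prefix_append _ _,
      forces_ex_of_forces (forces_atom_of_val (markovVal_append_true β))⟩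
  · obtain ⟨β, hβ, c, hc⟩ := h _ (isMaxChain_branch fun _ => false) (nil_mem_branch _)
    obtain ⟨k, -, hk⟩ := exists_eq_true_of_markovVal hβ (forces_atom_iff_markovVal.1 hc)
    exact Bool.false_ne_true hk
end

section
/- Existence of a lawless extension matching finitely many prescribed values: given a path S in the tree of finite sequences over a, a node γ ∈ S of length ≥ x+1, and prescribed values c₀,…,c_x ∈ a, there is a family of bijections ξ : ℕ → (a ≃ a) such that the lawless functional ν(ξ) satisfies ν(ξ)(γ̄, y) = c_y for all y ≤ x, where γ̄ is the initial segment of the path of length ≥ x+1. -/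
/-- The lawless functional associated to a family of bijections `ξ`:
`ν(ξ)(w,y) = ξ^[y](w_y)` if `y < length w`, undefined otherwise. -/
def lawless {a : Type} (ξ : ℕ → a ≃ a) (w : List a) (y : ℕ) : Option a :=
  (w[y]?).map (ξ y)

/-!
Any two nodes of a path are prefix-comparable, so they agree wherever both are defined: the path
spells out a single sequence `g`. Taking `ξ y` to be the transposition of `g y` and `c y` forces
`ν(ξ)(w, y) = ξ y (g y) = c y` at every node `w` of the path long enough to have a `y`-th entry.
-/

theorem List.IsPrefix.getElem?_eq_of_lt_length {α : Type*} {u v : List α} (h : u <+: v) {i : ℕ}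
    (hi : i < u.length) : u[i]? = v[i]? := by
  rw [List.getElem?_eq_getElem hi, List.getElem?_eq_getElem (hi.trans_le h.length_le),
    h.getElem hi]

theorem IsChain.getElem?_eq_of_prefix {α : Type*} {S : Set (List α)}
    (hS : IsChain (fun u v : List α => v <+: u) S) {u v : List α} (hu : u ∈ S) (hv : v ∈ S)
    {i : ℕ} (hiu : i < u.length) (hiv : i < v.length) : u[i]? = v[i]? :=
  (hS.total hu hv).elim (fun h => (h.getElem?_eq_of_lt_length hiv).symm)
    (fun h => h.getElem?_eq_of_lt_length hiu)

theorem lawless_swap_of_getElem?_eq {a : Type} [DecidableEq a] {g c : ℕ → a} {w : List a} {y : ℕ}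
    (h : w[y]? = some (g y)) : lawless (fun y => Equiv.swap (g y) (c y)) w y = some (c y) := by
  simp [lawless, h]

/-- existence of a lawless extension matching finitely many
prescribed values: given a path `S` in the tree of finite sequences over `a`
(ordered by reverse prefix), a node `γ ∈ S` of length ≥ x+1 and prescribed
values `c 0, …, c x`, there is a family of bijections `ξ` whose lawless
functional takes value `c y` at every node of the path of length > y, for
all `y ≤ x`. -/
theorem lawless_extension_exists {a : Type} [DecidableEq a]
    (S : Set (List a)) (hS : IsMaxChain (fun y x : List a => x <+: y) S)
    (γ : List a) (hγ : γ ∈ S) (x : ℕ) (hlen : x + 1 ≤ γ.length)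
    (c : ℕ → a) :
    ∃ ξ : ℕ → a ≃ a,
      (∀ y ≤ x, lawless ξ γ y = some (c y)) ∧
      (∀ w ∈ S, ∀ y ≤ x, y < w.length → lawless ξ w y = some (c y)) := by
  have hpath : ∀ w ∈ S, ∀ y ≤ x, y < w.length →
      lawless (fun y => Equiv.swap (γ.getD y (c y)) (c y)) w y = some (c y) := by
    intro w hw y hy hyw
    have hyγ : y < γ.length := by omega
    apply lawless_swap_of_getElem?_eq
    rw [hS.isChain.getElem?_eq_of_prefix hw hγ hyw hyγ, List.getElem?_eq_getElem hyγ,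
      List.getD_eq_getElem]
  exact ⟨_, fun y hy => hpath γ hγ y hy (by omega), hpath⟩
end
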